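/- Let (X, σ) be a subshift of finite type and φ an endomorphism of X such that |I(-n, φ)| = W^+(n,φ) - W^-(n,φ) + 1 → ∞ as n → ∞. Then there exists n₀ such that for all n ≥ n₀, the interval I(-n, φ) = [-W^+(n,φ), -W^-(n,φ)] φ^n-codes {0}. If X is a full shift, n₀ = 0 works and the growth hypothesis is unnecessary. -/

import Mathlib

open Filter Topology

/-- The left shift on bi-infinite sequences. -/
def shift {A : Type*} (x : ℤ → A) : ℤ → A := fun n => x (n + 1)

/-- The shift by `k` places (`σ^k`). -/
def zshift {A : Type*} (k : ℤ) (x : ℤ → A) : ℤ → A := fun n => x (n + k)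

/-- A subshift: a closed, shift-invariant subset of `Σ^ℤ`. -/
def IsSubshift {A : Type*} [TopologicalSpace A] (X : Set (ℤ → A)) : Prop :=
  IsClosed X ∧ shift '' X = X

/-- An endomorphism of the subshift `X`: a continuous shift-commuting surjection of `X`. -/
structure IsEndo {A : Type*} [TopologicalSpace A] (X : Set (ℤ → A))
    (φ : (ℤ → A) → (ℤ → A)) : Prop where
  maps : Set.MapsTo φ X X
  surj : Set.SurjOn φ X X
  cont : ContinuousOn φ X
  comm : ∀ x ∈ X, φ (shift x) = shift (φ x)

/-- `S` φ-codes `T`: agreement of two points of `X` on `S` forces agreement of their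
φ-images on `T`. -/
def Codes {A : Type*} (X : Set (ℤ → A)) (φ : (ℤ → A) → (ℤ → A)) (S T : Set ℤ) : Prop :=
  ∀ x ∈ X, ∀ y ∈ X, (∀ i ∈ S, x i = y i) → ∀ j ∈ T, φ x j = φ y j

/-- The set of integers `W` such that `[0,∞)` φⁿ-codes `[W,∞)`; `W⁺(n,φ)` is its
least element. -/
def WplusSet {A : Type*} (X : Set (ℤ → A)) (φ : (ℤ → A) → (ℤ → A)) (n : ℕ) : Set ℤ :=
  {W | Codes X (φ^[n]) (Set.Ici 0) (Set.Ici W)}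

/-- The set of integers `W` such that `(-∞,0]` φⁿ-codes `(-∞,W]`; `W⁻(n,φ)` is its
greatest element. -/
def WminusSet {A : Type*} (X : Set (ℤ → A)) (φ : (ℤ → A) → (ℤ → A)) (n : ℕ) : Set ℤ :=
  {W | Codes X (φ^[n]) (Set.Iic 0) (Set.Iic W)}

/-- A subshift of finite type: defined by a finite set of excluded words. -/
def IsSFT {A : Type*} (X : Set (ℤ → A)) : Prop :=
  ∃ F : Set (List A), F.Finite ∧
    ∀ x : ℤ → A, x ∈ X ↔ ∀ (n : ℤ), ∀ w ∈ F, ∃ i : Fin w.length, x (n + i) ≠ w.get i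

/-!
Translating the defining properties of `W⁺(n)` and `W⁻(n)` by `-W⁺(n)` and `-W⁻(n)` shows that
`φⁿ z 0` is determined by `z` on `(-∞, -W⁻(n)]`, and also by `z` on `[-W⁺(n), ∞)`. Given `x, y ∈ X`
agreeing on `I(-n, φ)`, splice them into the point `z` that equals `x` up to `-W⁻(n)` and `y`
afterwards; then `φⁿ x 0 = φⁿ z 0 = φⁿ y 0`. It remains to know that `z ∈ X`: this is automatic in
a full shift, and in an SFT whose forbidden words have length at most `L` it holds once
`|I(-n, φ)| ≥ L`, because every window of length at most `L` then lies in `(-∞, -W⁻(n)]` or in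
`[-W⁺(n), ∞)`.
-/

open Set

section Shifts

variable {A : Type*} {X : Set (ℤ → A)}

theorem zshift_zero (x : ℤ → A) : zshift 0 x = x :=
  funext fun n => by simp [zshift]

theorem zshift_one : zshift 1 = (shift : (ℤ → A) → ℤ → A) := rfl

theorem zshift_add (j k : ℤ) (x : ℤ → A) : zshift (j + k) x = zshift j (zshift k x) :=
  funext fun n => by simp [zshift, add_assoc]

theorem zshift_neg_one_shift (x : ℤ → A) : zshift (-1) (shift x) = x := by
  rw [← zshift_one, ← zshift_add, neg_add_cancel, zshift_zero]

theorem zshift_mem_of_shift_image_eq (hX : shift '' X = X) (k : ℤ) {x : ℤ → A} (hx : x ∈ X) :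
    zshift k x ∈ X := by
  induction k using Int.induction_on with
  | zero => rwa [zshift_zero]
  | succ k ih =>
    rw [add_comm, zshift_add, zshift_one, ← hX]
    exact mem_image_of_mem _ ih
  | pred k ih =>
    rw [← hX] at ih
    obtain ⟨y, hy, hxy⟩ := ih
    rwa [sub_eq_neg_add, zshift_add, ← hxy, zshift_neg_one_shift]

theorem zshift_comm_of_shift_comm (hX : shift '' X = X) {ψ : (ℤ → A) → ℤ → A}
    (hψ : ∀ x ∈ X, ψ (shift x) = shift (ψ x)) (k : ℤ) {x : ℤ → A} (hx : x ∈ X) :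
    ψ (zshift k x) = zshift k (ψ x) := by
  induction k using Int.induction_on with
  | zero => simp only [zshift_zero]
  | succ k ih =>
    rw [add_comm, zshift_add, zshift_add, zshift_one,
      hψ _ (zshift_mem_of_shift_image_eq hX k hx), ih]
  | pred k ih =>
    have hy := zshift_mem_of_shift_image_eq hX (-k - 1) hx
    have hshift : shift (zshift (-k - 1) x) = zshift (-k) x := by
      rw [← zshift_one, ← zshift_add]; congr 1; ring
    calc ψ (zshift (-k - 1) x) = zshift (-1) (shift (ψ (zshift (-k - 1) x))) :=
          (zshift_neg_one_shift _).symm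
      _ = zshift (-1) (zshift (-k) (ψ x)) := by rw [← hψ _ hy, hshift, ih]
      _ = zshift (-k - 1) (ψ x) := by rw [← zshift_add]; congr 1; ring

theorem Codes.image_add_const (hX : shift '' X = X)
    {ψ : (ℤ → A) → ℤ → A} (hψ : ∀ x ∈ X, ψ (shift x) = shift (ψ x)) {S T : Set ℤ}
    (h : Codes X ψ S T) (a : ℤ) :
    Codes X ψ ((· + a) '' S) ((· + a) '' T) := by
  rintro x hx y hy hxy _ ⟨j, hj, rfl⟩
  have := h _ (zshift_mem_of_shift_image_eq hX a hx) _ (zshift_mem_of_shift_image_eq hX a hy)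
    (fun i hi => hxy _ (mem_image_of_mem _ hi)) j hj
  rwa [zshift_comm_of_shift_comm hX hψ a hx, zshift_comm_of_shift_comm hX hψ a hy] at this

theorem IsEndo.iterate [TopologicalSpace A] {φ : (ℤ → A) → ℤ → A}
    (hφ : IsEndo X φ) (n : ℕ) : IsEndo X φ^[n] where
  maps := hφ.maps.iterate n
  surj := hφ.surj.iterate n
  cont := hφ.cont.iterate hφ.maps n
  comm := by
    induction n with
    | zero => simp
    | succ n ih =>
      intro x hx
      rw [Function.iterate_succ_apply', Function.iterate_succ_apply', ih x hx,
        hφ.comm _ (hφ.maps.iterate n hx)]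

def splice (b : ℤ) (x y : ℤ → A) : ℤ → A := fun i => if i ≤ b then x i else y i

theorem splice_eq_left {b i : ℤ} (h : i ≤ b) (x y : ℤ → A) : splice b x y i = x i := if_pos h

theorem splice_eq_right {a b : ℤ} {x y : ℤ → A} (hxy : ∀ i ∈ Icc a b, x i = y i) {i : ℤ}
    (hi : a ≤ i) : splice b x y i = y i := by
  unfold splice
  split_ifs with h
  exacts [hxy i ⟨hi, h⟩, rfl]

theorem codes_zero_of_splice_mem (hX : shift '' X = X)
    {ψ : (ℤ → A) → ℤ → A} (hψ : ∀ x ∈ X, ψ (shift x) = shift (ψ x)) {Wp Wm : ℤ}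
    (hp : Codes X ψ (Ici 0) (Ici Wp)) (hm : Codes X ψ (Iic 0) (Iic Wm))
    (hsplice : ∀ x ∈ X, ∀ y ∈ X, (∀ i ∈ Icc (-Wp) (-Wm), x i = y i) → splice (-Wm) x y ∈ X) :
    Codes X ψ (Icc (-Wp) (-Wm)) {0} := by
  rintro x hx y hy hxy _ rfl
  have hz := hsplice x hx y hy hxy
  have hp' := hp.image_add_const hX hψ (-Wp)
  have hm' := hm.image_add_const hX hψ (-Wm)
  simp only [image_add_const_Ici, image_add_const_Iic, zero_add, add_neg_cancel] at hp' hm'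
  calc ψ x 0 = ψ (splice (-Wm) x y) 0 :=
        hm' x hx _ hz (fun i hi => (splice_eq_left hi x y).symm) 0 self_mem_Iic
    _ = ψ y 0 := hp' _ hz y hy (fun i hi => splice_eq_right hxy hi) 0 self_mem_Ici

theorem IsSFT.exists_splice_mem (hX : IsSFT X) :
    ∃ L : ℕ, ∀ a b : ℤ, (L : ℤ) ≤ b - a + 1 →
      ∀ x ∈ X, ∀ y ∈ X, (∀ i ∈ Icc a b, x i = y i) → splice b x y ∈ X := by
  obtain ⟨F, hF, hmem⟩ := hX
  obtain ⟨L, hL⟩ := (hF.image List.length).bddAbove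
  refine ⟨L, fun a b hab x hx y hy hxy => (hmem _).2 fun m w hw => ?_⟩
  have hwL : (w.length : ℤ) ≤ L := by exact_mod_cast hL (mem_image_of_mem _ hw)
  by_cases hleft : m + w.length ≤ b + 1
  · obtain ⟨i, hi⟩ := (hmem x).1 hx m w hw
    exact ⟨i, by rwa [splice_eq_left (by have := i.isLt; omega)]⟩
  · obtain ⟨i, hi⟩ := (hmem y).1 hy m w hw
    exact ⟨i, by rwa [splice_eq_right hxy (by omega)]⟩

end Shifts

theorem lightcone_interval_codes_general {A : Type*} [TopologicalSpace A]
    (X : Set (ℤ → A)) (hX : IsSubshift X) (hSFT : IsSFT X)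
    (φ : (ℤ → A) → (ℤ → A)) (hφ : IsEndo X φ)
    (Wp Wm : ℕ → ℤ)
    (hWp : ∀ n, IsLeast (WplusSet X φ n) (Wp n))
    (hWm : ∀ n, IsGreatest (WminusSet X φ n) (Wm n)) :
    ((Tendsto (fun n : ℕ => Wp n - Wm n + 1) atTop atTop) →
      ∃ n₀ : ℕ, ∀ n : ℕ, n₀ ≤ n → Codes X (φ^[n]) (Set.Icc (-(Wp n)) (-(Wm n))) {0}) ∧
    (X = Set.univ → ∀ n : ℕ, Codes X (φ^[n]) (Set.Icc (-(Wp n)) (-(Wm n))) {0}) := by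
  have hcodes n := codes_zero_of_splice_mem hX.2 (hφ.iterate n).comm (hWp n).1 (hWm n).1
  refine ⟨fun htend => ?_, fun hfull n => hcodes n fun _ _ _ _ _ => hfull ▸ mem_univ _⟩
  obtain ⟨L, hL⟩ := hSFT.exists_splice_mem
  obtain ⟨n₀, hn₀⟩ := eventually_atTop.mp (htend.eventually_ge_atTop (L : ℤ))
  exact ⟨n₀, fun n hn => hcodes n (hL _ _ (by linarith [hn₀ n hn]))⟩

/-- For an SFT, if the widths `|I(-n,φ)| = W⁺(n) - W⁻(n) + 1` tend to infinity, then for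
all large `n` the interval `I(-n,φ) = [-W⁺(n), -W⁻(n)]` φⁿ-codes `{0}`; for a full shift
this holds for all `n` with no growth hypothesis. -/
theorem lightcone_interval_codes {A : Type*} [Fintype A] [TopologicalSpace A]
    [DiscreteTopology A] (X : Set (ℤ → A)) (hX : IsSubshift X) (hSFT : IsSFT X)
    (hinf : X.Infinite)
    (φ : (ℤ → A) → (ℤ → A)) (hφ : IsEndo X φ)
    (Wp Wm : ℕ → ℤ)
    (hWp : ∀ n, IsLeast (WplusSet X φ n) (Wp n))
    (hWm : ∀ n, IsGreatest (WminusSet X φ n) (Wm n)) :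
    ((Tendsto (fun n : ℕ => Wp n - Wm n + 1) atTop atTop) →
      ∃ n₀ : ℕ, ∀ n : ℕ, n₀ ≤ n → Codes X (φ^[n]) (Set.Icc (-(Wp n)) (-(Wm n))) {0}) ∧
    (X = Set.univ → ∀ n : ℕ, Codes X (φ^[n]) (Set.Icc (-(Wp n)) (-(Wm n))) {0}) :=
  lightcone_interval_codes_general X hX hSFT φ hφ Wp Wm hWp hWm
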